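/- Let k be a positive odd integer and G > 0. There is a constant C, depending only on k and G, such that the following holds. Let (A, X, h, (E_d)) be a sieve setup, let P be a finite set of primes with μ^P(1) ≥ 1, and let g₁,…,g_k be strongly additive functions with 0 ≤ g_j(p) ≤ G for all primes p and all 1 ≤ j ≤ k. Set 𝔎 = max_{1≤i,j≤k} |κ^P(g_i,g_j)| and assume 𝔎 ≥ 1. Then |Σ_{a ∈ A} Π_{j=1}^{k} F_{g_j}^P(a)| ≤ C·(X·𝔎^{(k−1)/2} + μ^P(1)^k · Σ_{d ∈ D_k(P)} |E_d|). -/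

import Mathlib

/-!
Expanding `F_{g_j}^P(a) = ∑_p g_j(p) f_p(a)` writes the sum as
`∑_π (∏_j g_j(π_j)) ∑_{a ∈ A} ∏_j f_{π_j}(a)` over `π : Fin k → P`. With `x_p = h(p)/p` one has
`f_p(a)^m = 1_{p ∣ a}((1 - x_p)^m - (-x_p)^m) + (-x_p)^m`; expanding the product over the distinct
values of `π` and counting multiples of squarefree `d` by `#A_d = x_d X + E_d` gives `X·H(π)` plus
a combination of the `E_d`.

`H(π)` is a product over the distinct values `p` of `π` of a factor that vanishes when `p` occurs
once and is at most `x_p(1 - x_p)` otherwise. Grouping the `π` by the partition of the indices into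
level sets, each block (of size `≥ 2`) contributes at most `G^{size - 2} 𝔎`, keeping two weights to
form a `κ`; for odd `k` there are at most `(k - 1)/2` blocks. In the error term `|E_d|` carries the
weight `∏_j (1 if π_j ∈ d else x_{π_j})`, whose sum over `π` is at most `(G(k + 1) μ^P(1))^k`.
-/
open MeasureTheory Filter
open scoped Classical

noncomputable section

/-- A function `g : ℕ → ℝ` is strongly additive if `g (m * n) = g m + g n` whenever
`m` and `n` are coprime, and `g (p ^ α) = g p` for every prime `p` and `α ≥ 1`. -/
def StronglyAdditive (g : ℕ → ℝ) : Prop :=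
  (∀ m n : ℕ, 0 < m → 0 < n → Nat.Coprime m n → g (m * n) = g m + g n) ∧
  ∀ p α : ℕ, p.Prime → 1 ≤ α → g (p ^ α) = g p

/-- A sieve setup: a finite multiset `A` of positive integers, an approximation `X > 0`
to `#A`, a multiplicative function `h` with `0 ≤ h(d) ≤ d`, and remainder terms `E d`
defined by `#A_d = (h(d)/d)·X + E_d`, where `A_d` is the sub-multiset of multiples of `d`. -/
structure SieveSetup where
  A : Multiset ℕ
  X : ℝ
  h : ℕ → ℝ
  E : ℕ → ℝ
  mem_pos : ∀ a ∈ A, 0 < a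
  X_pos : 0 < X
  h_one : h 1 = 1
  h_mult : ∀ m n : ℕ, Nat.Coprime m n → h (m * n) = h m * h n
  h_nonneg : ∀ d : ℕ, 0 < d → 0 ≤ h d
  h_le : ∀ d : ℕ, 0 < d → h d ≤ (d : ℝ)
  count_eq : ∀ d : ℕ, 0 < d →
    ((A.filter (fun a => d ∣ a)).card : ℝ) = h d / d * X + E d

/-- `μ^P(g) = ∑_{p ∈ P} g(p) h(p)/p`. -/
def muP (h : ℕ → ℝ) (P : Finset ℕ) (g : ℕ → ℝ) : ℝ := ∑ p ∈ P, g p * (h p / p)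

/-- `μ^P(1) = ∑_{p ∈ P} h(p)/p`. -/
def muP1 (h : ℕ → ℝ) (P : Finset ℕ) : ℝ := ∑ p ∈ P, h p / p

/-- `κ^P(g₁, g₂) = ∑_{p ∈ P} g₁(p) g₂(p) (h(p)/p)(1 − h(p)/p)`. -/
def kappaP (h : ℕ → ℝ) (P : Finset ℕ) (g₁ g₂ : ℕ → ℝ) : ℝ :=
  ∑ p ∈ P, g₁ p * g₂ p * (h p / p) * (1 - h p / p)

/-- `g^P(a) = ∑_{p ∈ P, p ∣ a} g(p)`. -/
def gP (P : Finset ℕ) (g : ℕ → ℝ) (a : ℕ) : ℝ := ∑ p ∈ P.filter (· ∣ a), g p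

/-- `f_r(a)`: the completely multiplicative function of `r` with
`f_p(a) = 1 − h(p)/p` if `p ∣ a` and `f_p(a) = −h(p)/p` if `p ∤ a`. -/
def ffun (h : ℕ → ℝ) (r a : ℕ) : ℝ :=
  r.factorization.prod fun p α => (if p ∣ a then 1 - h p / p else -(h p / p)) ^ α

/-- `F_g^P(a) = ∑_{p ∈ P} g(p) f_p(a)`. -/
def FP (h : ℕ → ℝ) (P : Finset ℕ) (g : ℕ → ℝ) (a : ℕ) : ℝ := ∑ p ∈ P, g p * ffun h p a

/-- `D_k(P)`: the squarefree integers (including 1) that are products of at most `k`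
distinct primes of `P`. -/
def Dk (P : Finset ℕ) (k : ℕ) : Finset ℕ :=
  (P.powerset.filter fun S => S.card ≤ k).image fun S => ∏ p ∈ S, p

/-- The multiplicative function `H` with
`H(p^α) = (h(p)/p)(1 − h(p)/p)^α + (−h(p)/p)^α (1 − h(p)/p)`. -/
def Hfun (h : ℕ → ℝ) (n : ℕ) : ℝ :=
  n.factorization.prod fun p α =>
    h p / p * (1 - h p / p) ^ α + (-(h p / p)) ^ α * (1 - h p / p)

/-- The multiplicative function `J(·, s)` with `J(p^α, s) = (1 − h(p)/p)^α − (−h(p)/p)^α`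
if `p ∣ s`, and `J(p^α, s) = (−h(p)/p)^α` if `p ∤ s`. -/
def Jfun (h : ℕ → ℝ) (r s : ℕ) : ℝ :=
  r.factorization.prod fun p α =>
    if p ∣ s then (1 - h p / p) ^ α - (-(h p / p)) ^ α else (-(h p / p)) ^ α

/-- A positive integer is squarefull if `p² ∣ n` for every prime `p ∣ n`. -/
def Squarefull (n : ℕ) : Prop := ∀ p : ℕ, p.Prime → p ∣ n → p ^ 2 ∣ n

/-- `τ : {1,…,k} → {1,…,l}` is 2-to-1 if every fiber has exactly two elements. -/
def TwoToOne {k l : ℕ} (τ : Fin k → Fin l) : Prop :=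
  ∀ j : Fin l, (Finset.univ.filter fun i => τ i = j).card = 2

/-- For a 2-to-1 map `τ` and symmetric `z`, this equals `∏_j z (Υ₁ j) (Υ₂ j)`, where
`Υ₁ j, Υ₂ j` are the two preimages of `j` under `τ`: each factor averages `z` over the
two ordered pairs of distinct elements of the fiber of `j`. -/
def fiberProd {k l : ℕ} (z : Fin k → Fin k → ℝ) (τ : Fin k → Fin l) : ℝ :=
  ∏ j : Fin l, (∑ i ∈ Finset.univ.filter (fun i => τ i = j),
    ∑ i' ∈ Finset.univ.filter (fun i' => τ i' = j ∧ i' ≠ i), z i i') / 2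

/-- `C_m = m! / (2^{m/2} (m/2)!)`, the `m`-th moment of the standard normal distribution
for even `m`. -/
def Cm (m : ℕ) : ℝ := (Nat.factorial m : ℝ) / (2 ^ (m / 2) * (Nat.factorial (m / 2) : ℝ))

/-- `A_Q(P) = Q(μ^P(g₁), …, μ^P(g_ℓ))`. -/
def AQP {ℓ : ℕ} (h : ℕ → ℝ) (P : Finset ℕ) (Q : MvPolynomial (Fin ℓ) ℝ)
    (g : Fin ℓ → ℕ → ℝ) : ℝ :=
  MvPolynomial.eval (fun i => muP h P (g i)) Q

/-- `B_Q(P)² = ∑_{i,j} (∂Q/∂T_i)(μ^P(g)) (∂Q/∂T_j)(μ^P(g)) κ^P(g_i, g_j)`. -/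
def BQP2 {ℓ : ℕ} (h : ℕ → ℝ) (P : Finset ℕ) (Q : MvPolynomial (Fin ℓ) ℝ)
    (g : Fin ℓ → ℕ → ℝ) : ℝ :=
  ∑ i : Fin ℓ, ∑ j : Fin ℓ,
    MvPolynomial.eval (fun i' => muP h P (g i')) (MvPolynomial.pderiv i Q) *
    MvPolynomial.eval (fun i' => muP h P (g i')) (MvPolynomial.pderiv j Q) *
    kappaP h P (g i) (g j)

/-- `B_Q(P)`, the square root of `B_Q(P)²`. -/
def BQP {ℓ : ℕ} (h : ℕ → ℝ) (P : Finset ℕ) (Q : MvPolynomial (Fin ℓ) ℝ)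
    (g : Fin ℓ → ℕ → ℝ) : ℝ :=
  Real.sqrt (BQP2 h P Q g)

/-- The `m`-th moment `M_m = ∑_{a ∈ A} (Q(g₁^P(a), …, g_ℓ^P(a)) − A_Q(P))^m`. -/
def Mm {ℓ : ℕ} (S : SieveSetup) (P : Finset ℕ) (Q : MvPolynomial (Fin ℓ) ℝ)
    (g : Fin ℓ → ℕ → ℝ) (m : ℕ) : ℝ :=
  (S.A.map fun a =>
    (MvPolynomial.eval (fun i => gP P (g i) a) Q - AQP S.h P Q g) ^ m).sum


open Finset

lemma abs_one_sub_pow_sub_neg_pow_le_one {x : ℝ} (hx₀ : 0 ≤ x) (hx₁ : x ≤ 1) {m : ℕ}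
    (hm : m ≠ 0) : |(1 - x) ^ m - (-x) ^ m| ≤ 1 :=
  calc |(1 - x) ^ m - (-x) ^ m| ≤ |(1 - x) ^ m| + |(-x) ^ m| := abs_sub _ _
    _ = (1 - x) ^ m + x ^ m := by
        rw [abs_pow, abs_pow, abs_neg, abs_of_nonneg hx₀, abs_of_nonneg (sub_nonneg.2 hx₁)]
    _ ≤ (1 - x) + x := add_le_add (pow_le_of_le_one (by linarith) (by linarith) hm)
        (pow_le_of_le_one hx₀ hx₁ hm)
    _ = 1 := by ring

lemma abs_mul_one_sub_pow_add_neg_pow_mul_le {x : ℝ} (hx₀ : 0 ≤ x) (hx₁ : x ≤ 1) {m : ℕ}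
    (hm : 2 ≤ m) : |x * (1 - x) ^ m + (-x) ^ m * (1 - x)| ≤ x * (1 - x) := by
  obtain ⟨n, rfl⟩ := Nat.exists_eq_add_of_le' hm
  have hx₁' : 0 ≤ 1 - x := sub_nonneg.2 hx₁
  calc |x * (1 - x) ^ (n + 2) + (-x) ^ (n + 2) * (1 - x)|
      ≤ |x * (1 - x) ^ (n + 2)| + |(-x) ^ (n + 2) * (1 - x)| := abs_add_le _ _
    _ = x * (1 - x) * ((1 - x) ^ (n + 1) + x ^ (n + 1)) := by
        rw [abs_mul, abs_mul, abs_pow, abs_pow, abs_neg, abs_of_nonneg hx₀,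
          abs_of_nonneg hx₁']
        ring
    _ ≤ x * (1 - x) * ((1 - x) + x) := by
        gcongr
        · exact pow_le_of_le_one hx₁' (by linarith) n.succ_ne_zero
        · exact pow_le_of_le_one hx₀ hx₁ n.succ_ne_zero
    _ = x * (1 - x) := by ring

lemma Multiset.sum_map_boole {α R : Type*} [AddCommMonoidWithOne R] (s : Multiset α)
    (p : α → Prop) [DecidablePred p] :
    (s.map fun a => if p a then (1 : R) else 0).sum = (s.filter p).card := by
  induction s using Multiset.induction_on with
  | empty => simp
  | cons a s ih => by_cases h : p a <;> simp [h, ih, add_comm]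

namespace SieveSetup

variable (S : SieveSetup)

lemma h_prod_primes {d : Finset ℕ} (hd : ∀ p ∈ d, p.Prime) : S.h (∏ p ∈ d, p) = ∏ p ∈ d, S.h p := by
  induction d using Finset.induction_on with
  | empty => simpa using S.h_one
  | @insert p d hp ih =>
    have hd' : ∀ q ∈ d, q.Prime := fun q hq => hd q (mem_insert_of_mem hq)
    have hcop : Nat.Coprime p (∏ q ∈ d, q) := Nat.Coprime.prod_right fun q hq =>
      (Nat.coprime_primes (hd p (mem_insert_self p d)) (hd' q hq)).2
        (ne_of_mem_of_not_mem hq hp).symm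
    rw [prod_insert hp, prod_insert hp, S.h_mult _ _ hcop, ih hd']

theorem sum_map_prod_boole_mul_add {T : Finset ℕ} (hT : ∀ p ∈ T, p.Prime) (B A : ℕ → ℝ) :
    (S.A.map fun a => ∏ p ∈ T, ((if p ∣ a then 1 else 0) * B p + A p)).sum
      = S.X * ∏ p ∈ T, (S.h p / p * B p + A p)
        + ∑ d ∈ T.powerset, (∏ p ∈ d, B p) * (∏ p ∈ T \ d, A p) * S.E (∏ p ∈ d, p) := by
  have hexpand : ∀ a, ∏ p ∈ T, ((if p ∣ a then 1 else 0) * B p + A p)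
      = ∑ d ∈ T.powerset,
          (if (∏ p ∈ d, p) ∣ a then 1 else 0) * ((∏ p ∈ d, B p) * ∏ p ∈ T \ d, A p) := by
    intro a
    rw [prod_add]
    refine sum_congr rfl fun d hd => ?_
    have hd' : ∀ p ∈ d, p.Prime := fun p hp => hT p (mem_powerset.1 hd hp)
    rw [prod_mul_distrib, prod_boole, mul_assoc]
    congr 2
    exact propext ⟨prod_primes_dvd a fun p hp => (hd' p hp).prime,
      fun h p hp => (dvd_prod_of_mem _ hp).trans h⟩
  have hcount : ∀ d ∈ T.powerset,
      (S.A.map fun a => if (∏ p ∈ d, p) ∣ a then (1 : ℝ) else 0).sum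
        = S.X * ∏ p ∈ d, S.h p / p + S.E (∏ p ∈ d, p) := by
    intro d hd
    have hd' : ∀ p ∈ d, p.Prime := fun p hp => hT p (mem_powerset.1 hd hp)
    rw [Multiset.sum_map_boole, S.count_eq _ (prod_pos fun p hp => (hd' p hp).pos),
      S.h_prod_primes hd', Nat.cast_prod, ← prod_div_distrib]
    ring
  calc (S.A.map fun a => ∏ p ∈ T, ((if p ∣ a then 1 else 0) * B p + A p)).sum
      = ∑ d ∈ T.powerset, (S.A.map fun a => if (∏ p ∈ d, p) ∣ a then (1 : ℝ) else 0).sum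
          * ((∏ p ∈ d, B p) * ∏ p ∈ T \ d, A p) := by
        simp_rw [hexpand, Multiset.sum_map_sum, Multiset.sum_map_mul_right]
    _ = ∑ d ∈ T.powerset, (S.X * ((∏ p ∈ d, S.h p / p * B p) * ∏ p ∈ T \ d, A p)
          + (∏ p ∈ d, B p) * (∏ p ∈ T \ d, A p) * S.E (∏ p ∈ d, p)) :=
        sum_congr rfl fun d hd => by rw [hcount d hd, prod_mul_distrib]; ring
    _ = _ := by rw [sum_add_distrib, ← mul_sum, prod_add]

end SieveSetup

lemma ffun_of_prime (h : ℕ → ℝ) {p : ℕ} (hp : p.Prime) (a : ℕ) :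
    ffun h p a = (if p ∣ a then 1 else 0) - h p / p := by
  rw [ffun, hp.factorization, Finsupp.prod_single_index (by simp), pow_one]
  split_ifs <;> ring

def fiberCard {α : Type*} [DecidableEq α] {k : ℕ} (π : Fin k → α) (p : α) : ℕ := #{j | π j = p}

lemma prod_apply_eq_prod_image_pow_fiberCard {α M : Type*} [DecidableEq α] [CommMonoid M] {k : ℕ}
    (π : Fin k → α) (f : α → M) : ∏ j, f (π j) = ∏ p ∈ univ.image π, f p ^ fiberCard π p :=
  prod_comp f π

section Expansion

variable {k : ℕ}

/-- The paper's `H(π₁ ⋯ πₖ)`, for the density `x p = h(p)/p`. -/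
def mainTerm (x : ℕ → ℝ) (π : Fin k → ℕ) : ℝ :=
  ∏ p ∈ univ.image π, (x p * (1 - x p) ^ fiberCard π p + (-x p) ^ fiberCard π p * (1 - x p))

/-- The paper's `∑_{d ∣ π₁ ⋯ πₖ} J(π₁ ⋯ πₖ, d) E_d`, with `d` running over squarefree divisors. -/
def errorTerm (x E : ℕ → ℝ) (π : Fin k → ℕ) : ℝ :=
  ∑ d ∈ (univ.image π).powerset,
    (∏ p ∈ d, ((1 - x p) ^ fiberCard π p - (-x p) ^ fiberCard π p))
      * (∏ p ∈ univ.image π \ d, (-x p) ^ fiberCard π p) * E (∏ p ∈ d, p)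

theorem SieveSetup.sum_map_prod_ffun (S : SieveSetup) {π : Fin k → ℕ} (hπ : ∀ j, (π j).Prime) :
    (S.A.map fun a => ∏ j, ffun S.h (π j) a).sum
      = S.X * mainTerm (fun p => S.h p / p) π + errorTerm (fun p => S.h p / p) S.E π := by
  have hT : ∀ p ∈ univ.image π, p.Prime := by simpa using hπ
  have hpow : ∀ a, ∏ j, ffun S.h (π j) a = ∏ p ∈ univ.image π,
      ((if p ∣ a then 1 else 0) * ((1 - S.h p / p) ^ fiberCard π p - (-(S.h p / p)) ^ fiberCard π p)
        + (-(S.h p / p)) ^ fiberCard π p) := by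
    intro a
    rw [prod_apply_eq_prod_image_pow_fiberCard π (fun p => ffun S.h p a)]
    refine prod_congr rfl fun p hp => ?_
    rw [ffun_of_prime S.h (hT p hp)]
    split_ifs <;> ring
  simp_rw [hpow]
  rw [S.sum_map_prod_boole_mul_add hT, mainTerm, errorTerm]
  congr 2
  exact prod_congr rfl fun p _ => by ring

theorem SieveSetup.sum_map_prod_FP (S : SieveSetup) {P : Finset ℕ} (hP : ∀ p ∈ P, p.Prime)
    (g : Fin k → ℕ → ℝ) :
    (S.A.map fun a => ∏ j, FP S.h P (g j) a).sum
      = S.X * ∑ π ∈ Fintype.piFinset fun _ => P,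
            (∏ j, g j (π j)) * mainTerm (fun p => S.h p / p) π
        + ∑ π ∈ Fintype.piFinset fun _ => P,
            (∏ j, g j (π j)) * errorTerm (fun p => S.h p / p) S.E π := by
  have hexpand : ∀ a, ∏ j, FP S.h P (g j) a
      = ∑ π ∈ Fintype.piFinset fun _ => P, (∏ j, g j (π j)) * ∏ j, ffun S.h (π j) a := by
    intro a
    simp_rw [FP, prod_univ_sum, prod_mul_distrib]
  simp_rw [hexpand, Multiset.sum_map_sum, Multiset.sum_map_mul_left]
  rw [mul_sum, ← sum_add_distrib]
  refine sum_congr rfl fun π hπ => ?_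
  rw [S.sum_map_prod_ffun fun j => hP _ (Fintype.mem_piFinset.1 hπ j)]
  ring

end Expansion

section Pattern

variable {α : Type*} {k : ℕ} {P : Finset α} {y : α → ℝ} {Φ : α → ℕ → ℝ} {g : Fin k → α → ℝ}
  {G K : ℝ}

/-- Two of the weights are kept to form `κ(g_a, g_b)`; the others are bounded by `G`. -/
lemma sum_abs_prod_mul_le (hG : 0 ≤ G) (hg : ∀ j, ∀ p ∈ P, 0 ≤ g j p ∧ g j p ≤ G)
    (hΦ : ∀ p ∈ P, ∀ m, 2 ≤ m → |Φ p m| ≤ y p) (hK : ∀ i j, ∑ p ∈ P, g i p * g j p * y p ≤ K)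
    {s : Finset (Fin k)} (hs : 2 ≤ #s) :
    ∑ p ∈ P, |(∏ j ∈ s, g j p) * Φ p #s| ≤ G ^ (#s - 2) * K := by
  obtain ⟨a, ha, b, hb, hab⟩ := one_lt_card.1 hs
  have hb' : b ∈ s.erase a := mem_erase.2 ⟨hab.symm, hb⟩
  have hcard : #((s.erase a).erase b) = #s - 2 := by
    rw [card_erase_of_mem hb', card_erase_of_mem ha, Nat.sub_sub]
  calc ∑ p ∈ P, |(∏ j ∈ s, g j p) * Φ p #s|
      ≤ ∑ p ∈ P, G ^ (#s - 2) * (g a p * g b p * y p) := sum_le_sum fun p hp => by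
        have hrest : ∏ j ∈ (s.erase a).erase b, g j p ≤ G ^ (#s - 2) := by
          rw [← hcard, ← prod_const]
          exact prod_le_prod (fun j _ => (hg j p hp).1) fun j _ => (hg j p hp).2
        rw [abs_mul, abs_of_nonneg (prod_nonneg fun j _ => (hg j p hp).1), ← mul_prod_erase _ _ ha,
          ← mul_prod_erase _ _ hb']
        calc g a p * (g b p * ∏ j ∈ (s.erase a).erase b, g j p) * |Φ p #s|
            ≤ g a p * (g b p * G ^ (#s - 2)) * y p := by
              gcongr
              · exact mul_nonneg (hg a p hp).1 (mul_nonneg (hg b p hp).1 (pow_nonneg hG _))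
              · exact (hg a p hp).1
              · exact (hg b p hp).1
              · exact hΦ p hp _ hs
          _ = G ^ (#s - 2) * (g a p * g b p * y p) := by ring
    _ = G ^ (#s - 2) * ∑ p ∈ P, g a p * g b p * y p := (mul_sum _ _ _).symm
    _ ≤ G ^ (#s - 2) * K := mul_le_mul_of_nonneg_left (hK a b) (pow_nonneg hG _)

/-- A fiber of size one kills the product since `Φ p 1 = 0`; otherwise all fibers have size at
least two, so there are at most `k / 2` of them. -/
lemma prod_sum_abs_prod_mul_le (hG : 1 ≤ G) (hK₁ : 1 ≤ K) (hg : ∀ j, ∀ p ∈ P, 0 ≤ g j p ∧ g j p ≤ G)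
    (hΦ₁ : ∀ p ∈ P, Φ p 1 = 0) (hΦ : ∀ p ∈ P, ∀ m, 2 ≤ m → |Φ p m| ≤ y p)
    (hK : ∀ i j, ∑ p ∈ P, g i p * g j p * y p ≤ K) (c : Fin k → Fin k) :
    ∏ r ∈ {r | c r = r}, ∑ p ∈ P, |(∏ j ∈ {j | c j = r}, g j p) * Φ p #{j | c j = r}|
      ≤ G ^ k * K ^ (k / 2) := by
  set R : Finset (Fin k) := {r | c r = r}
  set β : Fin k → ℕ := fun r => #{j | c j = r}
  by_cases hsmall : ∃ r ∈ R, β r < 2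
  · obtain ⟨r, hr, hβr⟩ := hsmall
    have hβ₁ : β r = 1 := by
      have : 0 < β r := card_pos.2 ⟨r, by simpa [R] using hr⟩
      omega
    rw [prod_eq_zero hr (sum_eq_zero fun p hp => by simp only [β] at hβ₁; simp [hβ₁, hΦ₁ p hp])]
    exact mul_nonneg (pow_nonneg (by linarith) _) (pow_nonneg (by linarith) _)
  push Not at hsmall
  have hsum : ∑ r ∈ R, β r ≤ k := by
    rw [sum_card_fiberwise_eq_card_filter]
    exact (card_filter_le _ _).trans (by simp)
  have hR : #R ≤ k / 2 := by
    have := sum_le_sum hsmall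
    rw [sum_const, smul_eq_mul] at this
    omega
  calc _ ≤ ∏ r ∈ R, G ^ (β r - 2) * K :=
        prod_le_prod (fun r _ => sum_nonneg fun _ _ => abs_nonneg _)
          fun r hr => sum_abs_prod_mul_le (by linarith) hg hΦ hK (hsmall r hr)
    _ = G ^ (∑ r ∈ R, (β r - 2)) * K ^ #R := by
        rw [prod_mul_distrib, prod_pow_eq_pow_sum, prod_const]
    _ ≤ G ^ k * K ^ (k / 2) := by
        gcongr
        exact (sum_le_sum fun r _ => Nat.sub_le _ _).trans hsum

variable [DecidableEq α]

/-- `firstIndex π` encodes the partition of the indices into the level sets of `π`. -/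
def firstIndex (π : Fin k → α) (j : Fin k) : Fin k :=
  ({i | π i = π j} : Finset (Fin k)).min' ⟨j, by simp⟩

lemma apply_firstIndex (π : Fin k → α) (j : Fin k) : π (firstIndex π j) = π j :=
  (mem_filter.1 (min'_mem ({i | π i = π j} : Finset (Fin k)) _)).2

lemma firstIndex_eq_firstIndex_iff (π : Fin k → α) {i j : Fin k} :
    firstIndex π i = firstIndex π j ↔ π i = π j := by
  refine ⟨fun h => by rw [← apply_firstIndex π i, h, apply_firstIndex π j], fun h => ?_⟩
  unfold firstIndex
  congr 1
  ext
  simp [h]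

lemma firstIndex_firstIndex (π : Fin k → α) (j : Fin k) :
    firstIndex π (firstIndex π j) = firstIndex π j :=
  (firstIndex_eq_firstIndex_iff π).2 (apply_firstIndex π j)

/-- The fixed points `r` of `c` index the distinct values `π r`, and the fiber of `c` over `r` is
the fiber of `π` over `π r`. -/
lemma abs_mul_prod_image_eq_of_firstIndex_eq {π : Fin k → α} {c : Fin k → Fin k}
    (hc : firstIndex π = c) (g : Fin k → α → ℝ) (Φ : α → ℕ → ℝ) :
    |(∏ j, g j (π j)) * ∏ p ∈ univ.image π, Φ p (fiberCard π p)|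
      = ∏ r ∈ {r | c r = r}, |(∏ j ∈ {j | c j = r}, g j (π r)) * Φ (π r) #{j | c j = r}| := by
  subst hc
  set R : Finset (Fin k) := {r | firstIndex π r = r}
  have hmem : ∀ j, firstIndex π j ∈ R := fun j => by simp [R, firstIndex_firstIndex]
  have hfiber : ∀ r ∈ R, ∀ j, firstIndex π j = r ↔ π j = π r := fun r hr j => by
    conv_lhs => rw [← (mem_filter.1 hr).2]
    exact firstIndex_eq_firstIndex_iff π
  have himage : univ.image π = R.image π := by
    refine (image_subset_image (subset_univ R)).antisymm' fun p hp => ?_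
    obtain ⟨j, -, rfl⟩ := mem_image.1 hp
    exact mem_image.2 ⟨firstIndex π j, hmem j, apply_firstIndex π j⟩
  have hinj : Set.InjOn π R := fun r hr r' hr' h => by
    rw [← (mem_filter.1 hr).2, ← (mem_filter.1 hr').2]
    exact (firstIndex_eq_firstIndex_iff π).2 h
  rw [himage, prod_image hinj,
    ← prod_fiberwise_of_maps_to (fun j _ => hmem j) (fun j => g j (π j)), ← prod_mul_distrib,
    abs_prod]
  refine prod_congr rfl fun r hr => ?_
  have hfilter : ({j | firstIndex π j = r} : Finset (Fin k)) = ({j | π j = π r} : Finset _) := by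
    ext j
    simp [hfiber r hr j]
  have hprod : ∏ j ∈ {j | firstIndex π j = r}, g j (π j)
      = ∏ j ∈ {j | firstIndex π j = r}, g j (π r) :=
    prod_congr rfl fun j hj => by rw [(hfiber r hr j).1 (mem_filter.1 hj).2]
  rw [fiberCard, ← hfilter, hprod]

/-- On the class `firstIndex π = c`, the map `π` is determined by its values at the fixed points
of `c`. -/
lemma sum_filter_firstIndex_eq_le (P : Finset α) (c : Fin k → Fin k) (Ψ : Fin k → α → ℝ)
    (hΨ : ∀ r, ∀ p ∈ P, 0 ≤ Ψ r p) :
    ∑ π ∈ (Fintype.piFinset fun _ => P).filter (firstIndex · = c), ∏ r ∈ {r | c r = r}, Ψ r (π r)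
      ≤ ∏ r ∈ {r | c r = r}, ∑ p ∈ P, Ψ r p := by
  set R : Finset (Fin k) := {r | c r = r}
  set restrict : (Fin k → α) → ∀ r ∈ R, α := fun π r _ => π r
  have hinj : Set.InjOn restrict ((Fintype.piFinset fun _ => P).filter (firstIndex · = c)) := by
    intro π hπ π' hπ' h
    have hc : firstIndex π = c := (mem_filter.1 hπ).2
    have hc' : firstIndex π' = c := (mem_filter.1 hπ').2
    funext j
    have hj : c j ∈ R := by simp [R, ← hc, firstIndex_firstIndex]
    rw [← apply_firstIndex π j, ← apply_firstIndex π' j, hc, hc']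
    exact congr_fun (congr_fun h (c j)) hj
  rw [prod_sum]
  calc _ = ∑ q ∈ ((Fintype.piFinset fun _ => P).filter (firstIndex · = c)).image restrict,
        ∏ r ∈ R.attach, Ψ r (q r r.2) := by
        rw [sum_image hinj]
        exact sum_congr rfl fun π _ => (prod_attach R fun r => Ψ r (π r)).symm
    _ ≤ _ := by
        refine sum_le_sum_of_subset_of_nonneg (image_subset_iff.2 fun π hπ => ?_)
          fun q hq _ => prod_nonneg fun r _ => hΨ _ _ (mem_pi.1 hq r r.2)
        exact mem_pi.2 fun r _ => Fintype.mem_piFinset.1 (mem_filter.1 hπ).1 r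

/-- Grouping the `π` by their pattern `firstIndex π`, of which there are at most `k ^ k`. -/
theorem sum_abs_mul_prod_image_le (hG : 1 ≤ G) (hK₁ : 1 ≤ K)
    (hg : ∀ j, ∀ p ∈ P, 0 ≤ g j p ∧ g j p ≤ G) (hΦ₁ : ∀ p ∈ P, Φ p 1 = 0)
    (hΦ : ∀ p ∈ P, ∀ m, 2 ≤ m → |Φ p m| ≤ y p) (hK : ∀ i j, ∑ p ∈ P, g i p * g j p * y p ≤ K) :
    ∑ π ∈ Fintype.piFinset (fun _ : Fin k => P),
        |(∏ j, g j (π j)) * ∏ p ∈ univ.image π, Φ p (fiberCard π p)|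
      ≤ k ^ k * (G ^ k * K ^ (k / 2)) := by
  rw [← sum_fiberwise _ firstIndex]
  calc _ ≤ ∑ _c : Fin k → Fin k, G ^ k * K ^ (k / 2) := sum_le_sum fun c _ => ?_
    _ = _ := by simp
  calc _ = ∑ π ∈ (Fintype.piFinset fun _ => P).filter (firstIndex · = c),
          ∏ r ∈ {r | c r = r}, |(∏ j ∈ {j | c j = r}, g j (π r)) * Φ (π r) #{j | c j = r}| :=
        sum_congr rfl fun π hπ => abs_mul_prod_image_eq_of_firstIndex_eq (mem_filter.1 hπ).2 g Φ
    _ ≤ ∏ r ∈ {r | c r = r}, ∑ p ∈ P, |(∏ j ∈ {j | c j = r}, g j p) * Φ p #{j | c j = r}| :=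
        sum_filter_firstIndex_eq_le P c
          (fun r p => |(∏ j ∈ {j | c j = r}, g j p) * Φ p #{j | c j = r}|) fun _ _ _ => abs_nonneg _
    _ ≤ G ^ k * K ^ (k / 2) := prod_sum_abs_prod_mul_le hG hK₁ hg hΦ₁ hΦ hK c

end Pattern

section ErrorTerm

variable {k : ℕ} {x : ℕ → ℝ} {P : Finset ℕ}

lemma abs_errorTerm_le (E : ℕ → ℝ) {π : Fin k → ℕ} (hx : ∀ j, 0 ≤ x (π j) ∧ x (π j) ≤ 1) :
    |errorTerm x E π| ≤ ∑ d ∈ (univ.image π).powerset,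
      (∏ j, if π j ∈ d then 1 else x (π j)) * |E (∏ p ∈ d, p)| := by
  refine (abs_sum_le_sum_abs _ _).trans (sum_le_sum fun d hd => ?_)
  set T := univ.image π
  have hdT : d ⊆ T := mem_powerset.1 hd
  have hxT : ∀ p ∈ T, 0 ≤ x p ∧ x p ≤ 1 := by simpa [T] using hx
  have hfiber : ∀ p ∈ T, fiberCard π p ≠ 0 := fun p hp => by
    obtain ⟨j, -, rfl⟩ := mem_image.1 hp
    exact card_ne_zero.2 ⟨j, by simp⟩
  have hB : ∏ p ∈ d, |(1 - x p) ^ fiberCard π p - (-x p) ^ fiberCard π p| ≤ 1 :=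
    prod_le_one (fun _ _ => abs_nonneg _) fun p hp =>
      abs_one_sub_pow_sub_neg_pow_le_one (hxT p (hdT hp)).1 (hxT p (hdT hp)).2 (hfiber p (hdT hp))
  have hA : ∏ p ∈ T \ d, |(-x p) ^ fiberCard π p|
      = ∏ p ∈ T \ d, (if p ∈ d then 1 else x p) ^ fiberCard π p :=
    prod_congr rfl fun p hp => by
      rw [if_neg (mem_sdiff.1 hp).2, abs_pow, abs_neg, abs_of_nonneg (hxT p (mem_sdiff.1 hp).1).1]
  have hd₁ : ∏ p ∈ d, (if p ∈ d then 1 else x p) ^ fiberCard π p = 1 :=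
    prod_eq_one fun p hp => by rw [if_pos hp, one_pow]
  rw [prod_apply_eq_prod_image_pow_fiberCard π (fun p => if p ∈ d then 1 else x p),
    ← prod_sdiff hdT, hd₁, mul_one, abs_mul, abs_mul, abs_prod, abs_prod, hA, mul_assoc]
  refine mul_le_of_le_one_left (mul_nonneg (prod_nonneg fun p hp => ?_) (abs_nonneg _)) hB
  rw [if_neg (mem_sdiff.1 hp).2]
  exact pow_nonneg (hxT p (mem_sdiff.1 hp).1).1 _

lemma abs_mul_errorTerm_le (hx : ∀ p ∈ P, 0 ≤ x p ∧ x p ≤ 1) {g : Fin k → ℕ → ℝ}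
    (hg : ∀ j, ∀ p ∈ P, 0 ≤ g j p) (E : ℕ → ℝ) {π : Fin k → ℕ}
    (hπ : π ∈ Fintype.piFinset fun _ => P) :
    |(∏ j, g j (π j)) * errorTerm x E π| ≤ ∑ d ∈ P.powerset.filter (#· ≤ k),
      (∏ j, g j (π j) * (if π j ∈ d then 1 else x (π j))) * |E (∏ p ∈ d, p)| := by
  have hπP : ∀ j, π j ∈ P := Fintype.mem_piFinset.1 hπ
  have hw : 0 ≤ ∏ j, g j (π j) := prod_nonneg fun j _ => hg j _ (hπP j)
  have hsubset : (univ.image π).powerset ⊆ P.powerset.filter (#· ≤ k) := fun d hd => by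
    have hdT := mem_powerset.1 hd
    refine mem_filter.2 ⟨mem_powerset.2 (hdT.trans ?_), (card_le_card hdT).trans ?_⟩
    · simpa [image_subset_iff] using hπP
    · simpa using card_image_le (s := univ) (f := π)
  rw [abs_mul, abs_of_nonneg hw]
  refine (mul_le_mul_of_nonneg_left (abs_errorTerm_le E fun j => hx _ (hπP j)) hw).trans ?_
  simp_rw [mul_sum, prod_mul_distrib, mul_assoc]
  refine sum_le_sum_of_subset_of_nonneg hsubset fun d _ _ => mul_nonneg hw
    (mul_nonneg (prod_nonneg fun j _ => ?_) (abs_nonneg _))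
  split_ifs
  exacts [zero_le_one, (hx _ (hπP j)).1]

lemma sum_mul_ite_mem_le (hx : ∀ p ∈ P, 0 ≤ x p) {f : ℕ → ℝ} {G : ℝ} (hG : 0 ≤ G)
    (hf : ∀ p ∈ P, 0 ≤ f p ∧ f p ≤ G) (d : Finset ℕ) :
    ∑ p ∈ P, f p * (if p ∈ d then 1 else x p) ≤ G * (#d + ∑ p ∈ P, x p) :=
  calc ∑ p ∈ P, f p * (if p ∈ d then 1 else x p)
      ≤ ∑ p ∈ P, G * ((if p ∈ d then 1 else 0) + x p) := sum_le_sum fun p hp => by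
        split_ifs
        · nlinarith [hf p hp, hx p hp]
        · nlinarith [hf p hp, hx p hp]
    _ = G * (#(P.filter (· ∈ d)) + ∑ p ∈ P, x p) := by
        rw [← mul_sum, sum_add_distrib, sum_boole]
    _ ≤ G * (#d + ∑ p ∈ P, x p) := by
        gcongr
        exact fun p hp => (mem_filter.1 hp).2

lemma sum_prod_mul_ite_mem_le (hx : ∀ p ∈ P, 0 ≤ x p) (hμ : 1 ≤ ∑ p ∈ P, x p)
    {g : Fin k → ℕ → ℝ} {G : ℝ} (hG : 0 ≤ G) (hg : ∀ j, ∀ p ∈ P, 0 ≤ g j p ∧ g j p ≤ G)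
    {d : Finset ℕ} (hd : #d ≤ k) :
    ∑ π ∈ Fintype.piFinset (fun _ : Fin k => P), ∏ j, g j (π j) * (if π j ∈ d then 1 else x (π j))
      ≤ (G * (k + 1) * ∑ p ∈ P, x p) ^ k := by
  have hdk : (#d : ℝ) ≤ k := by exact_mod_cast hd
  have hμk : G * (#d + ∑ p ∈ P, x p) ≤ G * (k + 1) * ∑ p ∈ P, x p := by
    nlinarith [mul_nonneg hG (sub_nonneg.2 hdk),
      mul_nonneg (mul_nonneg hG (Nat.cast_nonneg k)) (sub_nonneg.2 hμ)]
  rw [← prod_univ_sum (fun _ => P) fun j p => g j p * (if p ∈ d then 1 else x p)]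
  refine (prod_le_prod (fun j _ => sum_nonneg fun p hp => mul_nonneg (hg j p hp).1 ?_)
    fun j _ => (sum_mul_ite_mem_le hx hG (hg j) d).trans hμk).trans_eq (by simp)
  split_ifs
  exacts [zero_le_one, hx p hp]

theorem sum_abs_mul_errorTerm_le (hx : ∀ p ∈ P, 0 ≤ x p ∧ x p ≤ 1) (hμ : 1 ≤ ∑ p ∈ P, x p)
    {g : Fin k → ℕ → ℝ} {G : ℝ} (hG : 0 ≤ G) (hg : ∀ j, ∀ p ∈ P, 0 ≤ g j p ∧ g j p ≤ G)
    (E : ℕ → ℝ) :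
    ∑ π ∈ Fintype.piFinset (fun _ : Fin k => P), |(∏ j, g j (π j)) * errorTerm x E π|
      ≤ (G * (k + 1) * ∑ p ∈ P, x p) ^ k
        * ∑ d ∈ P.powerset.filter (#· ≤ k), |E (∏ p ∈ d, p)| := by
  calc _ ≤ ∑ π ∈ Fintype.piFinset (fun _ : Fin k => P), ∑ d ∈ P.powerset.filter (#· ≤ k),
          (∏ j, g j (π j) * (if π j ∈ d then 1 else x (π j))) * |E (∏ p ∈ d, p)| :=
        sum_le_sum fun π hπ => abs_mul_errorTerm_le hx (fun j p hp => (hg j p hp).1) E hπ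
    _ = ∑ d ∈ P.powerset.filter (#· ≤ k), (∑ π ∈ Fintype.piFinset (fun _ : Fin k => P),
          ∏ j, g j (π j) * (if π j ∈ d then 1 else x (π j))) * |E (∏ p ∈ d, p)| := by
        rw [sum_comm]
        simp_rw [sum_mul]
    _ ≤ ∑ d ∈ P.powerset.filter (#· ≤ k), (G * (k + 1) * ∑ p ∈ P, x p) ^ k * |E (∏ p ∈ d, p)| :=
        sum_le_sum fun d hd => mul_le_mul_of_nonneg_right
          (sum_prod_mul_ite_mem_le (fun p hp => (hx p hp).1) hμ hG hg (mem_filter.1 hd).2)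
          (abs_nonneg _)
    _ = _ := (mul_sum _ _ _).symm

end ErrorTerm

lemma SieveSetup.h_div_mem_Icc (S : SieveSetup) {p : ℕ} (hp : 0 < p) : S.h p / p ∈ Set.Icc 0 1 :=
  ⟨div_nonneg (S.h_nonneg p hp) p.cast_nonneg, div_le_one_of_le₀ (S.h_le p hp) p.cast_nonneg⟩

lemma sum_Dk_eq_sum_powerset {P : Finset ℕ} (hP : ∀ p ∈ P, p.Prime) (k : ℕ) (f : ℕ → ℝ) :
    ∑ d ∈ Dk P k, f d = ∑ s ∈ P.powerset.filter (#· ≤ k), f (∏ p ∈ s, p) := by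
  refine sum_image fun s hs t ht hst => ?_
  have hprime : ∀ s ∈ P.powerset.filter (#· ≤ k), ∀ p ∈ s, p.Prime := fun s hs p hp =>
    hP p (mem_powerset.1 (mem_filter.1 hs).1 hp)
  rw [← Nat.primeFactors_prod (hprime s hs), ← Nat.primeFactors_prod (hprime t ht)]
  exact congrArg Nat.primeFactors hst

lemma Odd.rpow_sub_one_div_two {k : ℕ} (hk : Odd k) (K : ℝ) :
    K ^ (((k : ℝ) - 1) / 2) = K ^ (k / 2) := by
  obtain ⟨n, rfl⟩ := hk
  rw [show (2 * n + 1) / 2 = n by omega, ← Real.rpow_natCast]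
  push_cast
  ring_nf

theorem SieveSetup.abs_sum_map_prod_FP_le (S : SieveSetup) {k : ℕ} {P : Finset ℕ}
    (hP : ∀ p ∈ P, p.Prime) (hμ : 1 ≤ muP1 S.h P) {g : Fin k → ℕ → ℝ} {G K : ℝ} (hG : 1 ≤ G)
    (hg : ∀ j, ∀ p ∈ P, 0 ≤ g j p ∧ g j p ≤ G) (hK : ∀ i j, |kappaP S.h P (g i) (g j)| ≤ K)
    (hK₁ : 1 ≤ K) :
    |(S.A.map fun a => ∏ j, FP S.h P (g j) a).sum|
      ≤ k ^ k * G ^ k * (S.X * K ^ (k / 2))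
        + (G * (k + 1)) ^ k * (muP1 S.h P ^ k * ∑ d ∈ Dk P k, |S.E d|) := by
  rw [muP1] at hμ
  rw [S.sum_map_prod_FP hP, sum_Dk_eq_sum_powerset hP, muP1]
  set x : ℕ → ℝ := fun p => S.h p / p
  have hx : ∀ p ∈ P, 0 ≤ x p ∧ x p ≤ 1 := fun p hp => S.h_div_mem_Icc (hP p hp).pos
  have hκ : ∀ i j, ∑ p ∈ P, g i p * g j p * (x p * (1 - x p)) ≤ K := fun i j =>
    (le_of_eq (by simp only [kappaP, x, mul_assoc])).trans ((le_abs_self _).trans (hK i j))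
  have hmain := sum_abs_mul_prod_image_le hG hK₁ hg
    (Φ := fun p m => x p * (1 - x p) ^ m + (-x p) ^ m * (1 - x p)) (fun p _ => by ring)
    (fun p hp m hm => abs_mul_one_sub_pow_add_neg_pow_mul_le (hx p hp).1 (hx p hp).2 hm) hκ
  have herr := sum_abs_mul_errorTerm_le hx hμ (by linarith) hg S.E
  calc _ ≤ S.X * (k ^ k * (G ^ k * K ^ (k / 2)))
        + (G * (k + 1) * ∑ p ∈ P, x p) ^ k
          * ∑ s ∈ P.powerset.filter (#· ≤ k), |S.E (∏ p ∈ s, p)| := by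
        refine (abs_add_le _ _).trans (add_le_add ?_ ((abs_sum_le_sum_abs _ _).trans herr))
        rw [abs_mul, abs_of_pos S.X_pos]
        exact mul_le_mul_of_nonneg_left ((abs_sum_le_sum_abs _ _).trans hmain) S.X_pos.le
    _ = _ := by rw [mul_pow]; ring

theorem sum_products_F_odd_general (k : ℕ) (hko : Odd k) (G : ℝ) :
    ∃ C : ℝ, ∀ (S : SieveSetup) (P : Finset ℕ), (∀ p ∈ P, p.Prime) →
      1 ≤ muP1 S.h P →
      ∀ g : Fin k → ℕ → ℝ, (∀ j, StronglyAdditive (g j)) →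
      (∀ j, ∀ p : ℕ, p.Prime → 0 ≤ g j p ∧ g j p ≤ G) →
      ∀ K : ℝ,
      (∀ i j : Fin k, |kappaP S.h P (g i) (g j)| ≤ K) →
      (∃ i j : Fin k, K = |kappaP S.h P (g i) (g j)|) →
      1 ≤ K →
      |(S.A.map fun a => ∏ j : Fin k, FP S.h P (g j) a).sum|
      ≤ C * (S.X * K ^ (((k : ℝ) - 1) / 2) + muP1 S.h P ^ k * ∑ d ∈ Dk P k, |S.E d|) := by
  set G' := max G 1
  refine ⟨k ^ k * G' ^ k + (G' * (k + 1)) ^ k, fun S P hP hμ g _ hg K hK _ hK₁ => ?_⟩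
  have hg' : ∀ j, ∀ p ∈ P, 0 ≤ g j p ∧ g j p ≤ G' := fun j p hp =>
    ⟨(hg j p (hP p hp)).1, (hg j p (hP p hp)).2.trans (le_max_left _ _)⟩
  have hXK : 0 ≤ S.X * K ^ (k / 2) := mul_nonneg S.X_pos.le (pow_nonneg (by linarith) _)
  have hE : 0 ≤ muP1 S.h P ^ k * ∑ d ∈ Dk P k, |S.E d| :=
    mul_nonneg (pow_nonneg (by linarith) _) (sum_nonneg fun _ _ => abs_nonneg _)
  rw [hko.rpow_sub_one_div_two]
  refine (S.abs_sum_map_prod_FP_le hP hμ (le_max_right G 1) hg' hK hK₁).trans ?_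
  nlinarith [mul_nonneg (by positivity : (0 : ℝ) ≤ k ^ k * G' ^ k) hE,
    mul_nonneg (by positivity : (0 : ℝ) ≤ (G' * (k + 1)) ^ k) hXK]

/-- **Proposition 5.6 (odd case)**: for odd `k`,
`∑_{a ∈ A} ∏_j F_{g_j}^P(a) ≪ X 𝔎^{(k−1)/2} + μ^P(1)^k ∑_{d ∈ D_k(P)} |E_d|`. -/
theorem sum_products_F_odd (k : ℕ) (hk : 0 < k) (hko : Odd k) (G : ℝ) (hG : 0 < G) :
    ∃ C : ℝ, ∀ (S : SieveSetup) (P : Finset ℕ), (∀ p ∈ P, p.Prime) →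
      1 ≤ muP1 S.h P →
      ∀ g : Fin k → ℕ → ℝ, (∀ j, StronglyAdditive (g j)) →
      (∀ j, ∀ p : ℕ, p.Prime → 0 ≤ g j p ∧ g j p ≤ G) →
      ∀ K : ℝ,
      (∀ i j : Fin k, |kappaP S.h P (g i) (g j)| ≤ K) →
      (∃ i j : Fin k, K = |kappaP S.h P (g i) (g j)|) →
      1 ≤ K →
      |(S.A.map fun a => ∏ j : Fin k, FP S.h P (g j) a).sum|
      ≤ C * (S.X * K ^ (((k : ℝ) - 1) / 2) + muP1 S.h P ^ k * ∑ d ∈ Dk P k, |S.E d|) :=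
  sum_products_F_odd_general k hko G
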